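/- Let u, w be adjacent vertices of the Farey graph 𝓕. Then the induced subgraph of 𝓕 on the vertex set V(𝓕) \ {u, w} has exactly two connected components. In particular, every edge of 𝓕 separates 𝓕. -/

import Mathlib

/-- Primitive vectors in `ℤ²`. -/
def PrimVec : Type := {v : Fin 2 → ℤ // IsCoprime (v 0) (v 1)}

/-- Identify a primitive vector with its negation. -/
def fareySetoid : Setoid PrimVec where
  r v w := v.1 = w.1 ∨ v.1 = -w.1
  iseqv := by
    refine ⟨fun v => Or.inl rfl, ?_, ?_⟩
    · rintro v w (h | h)
      · exact Or.inl h.symm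
      · exact Or.inr (by rw [h, neg_neg])
    · rintro u v w (h1 | h1) (h2 | h2)
      · exact Or.inl (h1.trans h2)
      · exact Or.inr (by rw [h1, h2])
      · exact Or.inr (by rw [h1, h2])
      · exact Or.inl (by rw [h1, h2, neg_neg])

/-- Vertices of the Farey graph: primitive vectors of `ℤ²` modulo negation. -/
def FareyVertex : Type := Quotient fareySetoid

def fareyDet (v w : Fin 2 → ℤ) : ℤ := v 0 * w 1 - v 1 * w 0

lemma fareyDet_neg_left (v w : Fin 2 → ℤ) : fareyDet (-v) w = -fareyDet v w := by
  simp [fareyDet]; ring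

lemma fareyDet_neg_right (v w : Fin 2 → ℤ) : fareyDet v (-w) = -fareyDet v w := by
  simp [fareyDet]; ring

/-- The Farey graph. -/
def Farey : SimpleGraph FareyVertex where
  Adj := Quotient.lift₂
    (fun v w : PrimVec => fareyDet v.1 w.1 = 1 ∨ fareyDet v.1 w.1 = -1)
    (by
      rintro a b a' b' (h1 | h1) (h2 | h2) <;>
        simp only [eq_iff_iff] <;>
        rw [h1, h2] <;>
        simp only [fareyDet_neg_left, fareyDet_neg_right, neg_neg] <;>
        omega)
  symm := by
    constructor
    intro a b
    refine Quotient.inductionOn₂ a b ?_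
    intro v w h
    have hd : fareyDet w.1 v.1 = -fareyDet v.1 w.1 := by simp [fareyDet]; ring
    show fareyDet w.1 v.1 = 1 ∨ fareyDet w.1 v.1 = -1
    rcases h with h | h <;> omega
  loopless := by
    constructor
    intro a
    refine Quotient.inductionOn a ?_
    intro v h
    have hd : fareyDet v.1 v.1 = 0 := by simp [fareyDet]; ring
    rcases (h : fareyDet v.1 v.1 = 1 ∨ fareyDet v.1 v.1 = -1) with h | h <;> omega

/-- The Farey vertex of a primitive vector. -/
def fv (v : Fin 2 → ℤ) (h : IsCoprime (v 0) (v 1)) : FareyVertex :=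
  Quotient.mk fareySetoid ⟨v, h⟩

/-!
The group `GL₂(ℤ)` acts on the Farey graph by automorphisms, transitively on oriented edges
(send `e₁, e₂` to representatives of the endpoints). So it suffices to remove the edge between
`∞ = [1 : 0]` and `0 = [0 : 1]`. The remaining vertices are the `[p : q]` with `pq ≠ 0`, and the
sign of `pq` is constant along edges: if `pq` and `p'q'` had opposite signs, then `pq'` and
`qp'` would too, so `|pq' - qp'| ≥ 2`. Within one sign, each `[p : q]` with `p, q ≥ 1` other
than `[1 : 1]` has a neighbour `[a : b]` with `a, b ≥ 1` and `a + b < p + q` (a Stern–Brocot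
parent), so everything is connected to `[1 : 1]`, resp. `[-1 : 1]`.
-/

open Matrix

lemma isCoprime_of_isUnit_mul_sub_mul {R : Type*} [CommRing R] {p q a b : R}
    (h : IsUnit (p * b - q * a)) : IsCoprime a b := by
  obtain ⟨c, hc⟩ := h.exists_left_inv
  exact ⟨-(c * q), c * p, by linear_combination hc⟩

lemma Int.one_lt_abs_sub_of_mul_neg {x y : ℤ} (h : x * y < 0) : 1 < |x - y| := by
  rcases mul_neg_iff.mp h with ⟨hx, hy⟩ | ⟨hx, hy⟩
  · rw [abs_of_pos (by omega)]; omega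
  · rw [abs_of_neg (by omega)]; omega

lemma Equiv.bijOn_compl_pair {α β : Type*} (e : α ≃ β) (a b : α) :
    Set.BijOn e {a, b}ᶜ {e a, e b}ᶜ := by
  rw [← Set.image_pair, ← Set.image_compl_eq e.bijective]
  exact e.injective.injOn.bijOn_image

lemma isCoprime_of_isCoprime_mulVec (M : Matrix (Fin 2) (Fin 2) ℤ) {v : Fin 2 → ℤ}
    (h : IsCoprime ((M *ᵥ v) 0) ((M *ᵥ v) 1)) : IsCoprime (v 0) (v 1) := by
  obtain ⟨s, t, hst⟩ := h
  refine ⟨s * M 0 0 + t * M 1 0, s * M 0 1 + t * M 1 1, ?_⟩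
  simp only [mulVec, dotProduct, Fin.sum_univ_two] at hst
  linear_combination hst

lemma isCoprime_mulVec (g : GL (Fin 2) ℤ) {v : Fin 2 → ℤ} (h : IsCoprime (v 0) (v 1)) :
    IsCoprime ((g.val *ᵥ v) 0) ((g.val *ᵥ v) 1) :=
  isCoprime_of_isCoprime_mulVec g⁻¹.val <| by
    rwa [mulVec_mulVec, ← Units.val_mul, inv_mul_cancel, Units.val_one, one_mulVec]

lemma fareyDet_mulVec (M : Matrix (Fin 2) (Fin 2) ℤ) (v w : Fin 2 → ℤ) :
    fareyDet (M *ᵥ v) (M *ᵥ w) = M.det * fareyDet v w := by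
  simp only [fareyDet, mulVec, dotProduct, Fin.sum_univ_two, det_fin_two]
  ring

lemma mul_pos_iff_of_isUnit_fareyDet {v w : Fin 2 → ℤ} (hv : v 0 * v 1 ≠ 0)
    (hw : w 0 * w 1 ≠ 0) (h : IsUnit (fareyDet v w)) : 0 < v 0 * v 1 ↔ 0 < w 0 * w 1 := by
  by_contra hne
  have hneg : (v 0 * w 1) * (v 1 * w 0) < 0 := by
    have : (v 0 * v 1) * (w 0 * w 1) < 0 := by
      generalize v 0 * v 1 = a at *
      generalize w 0 * w 1 = b at *
      rw [mul_neg_iff]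
      omega
    linarith
  exact (Int.one_lt_abs_sub_of_mul_neg hneg).ne' (Int.isUnit_iff_abs_eq.mp h)

lemma exists_farey_parent {p q : ℤ} (hp : 1 ≤ p) (hq : 1 ≤ q) (h : IsCoprime p q)
    (hpq : p ≠ 1 ∨ q ≠ 1) :
    ∃ a b : ℤ, 1 ≤ a ∧ 1 ≤ b ∧ a + b < p + q ∧ IsUnit (p * b - q * a) := by
  obtain rfl | hq2 : q = 1 ∨ 2 ≤ q := by omega
  · exact ⟨p - 1, 1, by omega, le_rfl, by omega, by ring_nf; exact isUnit_one⟩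
  obtain ⟨s, t, hst⟩ := h
  -- `b ≡ -p⁻¹ (mod q)` with `0 ≤ b < q`, and then `p * b - q * a = -1`
  obtain ⟨b, hb0, hbq, a, ha⟩ : ∃ b, 0 ≤ b ∧ b < q ∧ q ∣ p * b + 1 :=
    ⟨(-s) % q, Int.emod_nonneg _ (by omega), Int.emod_lt_of_pos _ (by omega),
      t - p * ((-s) / q), by rw [Int.emod_def]; linear_combination -hst⟩
  have hb1 : 1 ≤ b := by
    by_contra! hb1
    obtain rfl : b = 0 := by omega
    have := Int.eq_one_of_mul_eq_one_right (by omega) (by linarith : q * a = 1)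
    omega
  have ha1 : 1 ≤ a := by nlinarith
  have hap : a ≤ p := by nlinarith
  refine ⟨a, b, ha1, hb1, by omega, ?_⟩
  rw [show p * b - q * a = -1 by linarith]
  exact isUnit_one.neg

namespace FareyVertex

@[elab_as_elim]
lemma ind {P : FareyVertex → Prop} (h : ∀ v hv, P (fv v hv)) (x : FareyVertex) : P x :=
  Quotient.ind (fun v => h v.1 v.2) x

lemma fv_eq_fv_iff {v w : Fin 2 → ℤ} (hv : IsCoprime (v 0) (v 1)) (hw : IsCoprime (w 0) (w 1)) :
    fv v hv = fv w hw ↔ v = w ∨ v = -w :=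
  Quotient.eq (r := fareySetoid)

lemma farey_adj_fv_iff {v w : Fin 2 → ℤ} (hv : IsCoprime (v 0) (v 1))
    (hw : IsCoprime (w 0) (w 1)) : Farey.Adj (fv v hv) (fv w hw) ↔ IsUnit (fareyDet v w) :=
  Int.isUnit_iff.symm

instance : MulAction (GL (Fin 2) ℤ) FareyVertex where
  smul g := Quotient.map (fun v => ⟨g.val *ᵥ v.1, isCoprime_mulVec g v.2⟩) <| by
    rintro v w (h | h)
    · exact Or.inl (congrArg (g.val *ᵥ ·) h)
    · exact Or.inr ((congrArg (g.val *ᵥ ·) h).trans (mulVec_neg _ _))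
  one_smul := ind fun v _ => (fv_eq_fv_iff _ _).2 (.inl (one_mulVec v))
  mul_smul g h := ind fun v _ => (fv_eq_fv_iff _ _).2 (.inl (mulVec_mulVec v g.val h.val).symm)

lemma smul_fv (g : GL (Fin 2) ℤ) {v : Fin 2 → ℤ} (hv : IsCoprime (v 0) (v 1)) :
    g • fv v hv = fv (g.val *ᵥ v) (isCoprime_mulVec g hv) := rfl

def glIso (g : GL (Fin 2) ℤ) : Farey ≃g Farey where
  toEquiv := MulAction.toPerm g
  map_rel_iff' {x y} := by
    induction x using ind
    induction y using ind
    simp only [MulAction.toPerm_apply, smul_fv, farey_adj_fv_iff, fareyDet_mulVec,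
      ← GeneralLinearGroup.val_det_apply]
    exact Units.isUnit_units_mul _ _

-- `[p : q]` is the vertex of the fraction `p / q`.
def infty : FareyVertex := fv ![1, 0] isCoprime_one_left

def zero : FareyVertex := fv ![0, 1] isCoprime_one_right

lemma exists_smul_eq_of_farey_adj {x y : FareyVertex} (h : Farey.Adj x y) :
    ∃ g : GL (Fin 2) ℤ, g • infty = x ∧ g • zero = y := by
  induction x using ind with | h u hu => ?_
  induction y using ind with | h w hw => ?_
  rw [farey_adj_fv_iff] at h
  have hdet : IsUnit (!![u 0, w 0; u 1, w 1]).det := by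
    rwa [det_fin_two_of, mul_comm (w 0)]
  refine ⟨nonsingInvUnit _ hdet, (fv_eq_fv_iff _ _).2 (.inl ?_),
    (fv_eq_fv_iff _ _).2 (.inl ?_)⟩ <;> ext i <;> fin_cases i <;> simp [nonsingInvUnit]

lemma fv_eq_infty_iff {v : Fin 2 → ℤ} (hv : IsCoprime (v 0) (v 1)) :
    fv v hv = infty ↔ v 1 = 0 := by
  refine (fv_eq_fv_iff hv _).trans ⟨by rintro (rfl | rfl) <;> simp, fun h1 => ?_⟩
  rw [h1, isCoprime_zero_right, Int.isUnit_iff] at hv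
  rcases hv with h0 | h0
  · exact .inl (by ext i; fin_cases i <;> simp [h0, h1])
  · exact .inr (by ext i; fin_cases i <;> simp [h0, h1])

lemma fv_eq_zero_iff {v : Fin 2 → ℤ} (hv : IsCoprime (v 0) (v 1)) :
    fv v hv = zero ↔ v 0 = 0 := by
  refine (fv_eq_fv_iff hv _).trans ⟨by rintro (rfl | rfl) <;> simp, fun h0 => ?_⟩
  rw [h0, isCoprime_zero_left, Int.isUnit_iff] at hv
  rcases hv with h1 | h1
  · exact .inl (by ext i; fin_cases i <;> simp [h0, h1])
  · exact .inr (by ext i; fin_cases i <;> simp [h0, h1])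

abbrev complInftyZero : Set FareyVertex := {infty, zero}ᶜ

lemma fv_mem_complInftyZero_iff {v : Fin 2 → ℤ} (hv : IsCoprime (v 0) (v 1)) :
    fv v hv ∈ complInftyZero ↔ v 0 ≠ 0 ∧ v 1 ≠ 0 := by
  simp only [Set.mem_compl_iff, Set.mem_insert_iff, Set.mem_singleton_iff, fv_eq_infty_iff,
    fv_eq_zero_iff]
  tauto

def IsPositive : FareyVertex → Prop :=
  Quotient.lift (fun v => 0 < v.1 0 * v.1 1) <| by
    rintro v w (h | h) <;> simp only [h, Pi.neg_apply, neg_mul_neg]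

lemma isPositive_iff_of_adj {x y : complInftyZero} (h : (Farey.induce complInftyZero).Adj x y) :
    x.1.IsPositive ↔ y.1.IsPositive := by
  obtain ⟨x, hx⟩ := x
  obtain ⟨y, hy⟩ := y
  induction x using ind
  induction y using ind
  rw [fv_mem_complInftyZero_iff] at hx hy
  exact mul_pos_iff_of_isUnit_fareyDet (mul_ne_zero hx.1 hx.2) (mul_ne_zero hy.1 hy.2)
    ((farey_adj_fv_iff _ _).mp h)

lemma isPositive_iff_of_reachable {x y : complInftyZero}
    (h : (Farey.induce complInftyZero).Reachable x y) :
    x.1.IsPositive ↔ y.1.IsPositive := by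
  rw [SimpleGraph.reachable_iff_reflTransGen] at h
  induction h with
  | refl => rfl
  | tail _ hadj ih => exact ih.trans (isPositive_iff_of_adj hadj)

def offEdge (p q : ℤ) (h : IsCoprime p q) (hp : p ≠ 0) (hq : 0 < q) : complInftyZero :=
  ⟨fv ![p, q] h, (fv_mem_complInftyZero_iff _).mpr ⟨hp, hq.ne'⟩⟩

lemma offEdge_adj_offEdge {p q a b : ℤ} (h : IsCoprime p q) (hp : p ≠ 0) (hq : 0 < q)
    (h' : IsCoprime a b) (ha : a ≠ 0) (hb : 0 < b) (hdet : IsUnit (p * b - q * a)) :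
    (Farey.induce complInftyZero).Adj (offEdge p q h hp hq) (offEdge a b h' ha hb) :=
  (farey_adj_fv_iff (v := ![p, q]) (w := ![a, b]) h h').mpr hdet

lemma exists_offEdge_eq (x : complInftyZero) : ∃ p q h hp hq, x = offEdge p q h hp hq := by
  obtain ⟨x, hx⟩ := x
  induction x using ind with | h v hv => ?_
  obtain ⟨h0, h1⟩ := (fv_mem_complInftyZero_iff hv).mp hx
  rcases h1.lt_or_gt with h1 | h1
  · refine ⟨-v 0, -v 1, hv.neg_neg, neg_ne_zero.mpr h0, neg_pos.mpr h1,
      Subtype.ext ((fv_eq_fv_iff _ _).mpr (.inr ?_))⟩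
    ext i; fin_cases i <;> simp
  · refine ⟨v 0, v 1, hv, h0, h1, Subtype.ext ((fv_eq_fv_iff _ _).mpr (.inl ?_))⟩
    ext i; fin_cases i <;> simp

lemma reachable_offEdge {ε : ℤ} (hε : IsUnit ε) {p q : ℤ} (hp : 1 ≤ p) (hq : 1 ≤ q)
    (h : IsCoprime p q) :
    (Farey.induce complInftyZero).Reachable
      (offEdge (ε * p) q ((isCoprime_mul_unit_left_left hε p q).mpr h)
        (mul_ne_zero hε.ne_zero (by omega)) (by omega))
      (offEdge ε 1 isCoprime_one_right hε.ne_zero one_pos) := by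
  by_cases hpq : p = 1 ∧ q = 1
  · obtain ⟨rfl, rfl⟩ := hpq
    simp only [mul_one]
    rfl
  obtain ⟨a, b, ha, hb, hab, hdet⟩ := exists_farey_parent hp hq h (by tauto)
  have hab' := isCoprime_of_isUnit_mul_sub_mul hdet
  refine (offEdge_adj_offEdge _ _ _ ((isCoprime_mul_unit_left_left hε a b).mpr hab')
    (mul_ne_zero hε.ne_zero (by omega)) (by omega) ?_).reachable.trans
    (reachable_offEdge hε ha hb hab')
  rw [show ε * p * b - q * (ε * a) = ε * (p * b - q * a) by ring]
  exact hε.mul hdet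
termination_by (p + q).toNat
decreasing_by omega

lemma reachable_offEdge_one_or_neg_one {p q : ℤ} (h : IsCoprime p q) (hp : p ≠ 0) (hq : 0 < q) :
    (Farey.induce complInftyZero).Reachable (offEdge p q h hp hq)
        (offEdge 1 1 isCoprime_one_right one_ne_zero one_pos) ∨
      (Farey.induce complInftyZero).Reachable (offEdge p q h hp hq)
        (offEdge (-1) 1 isCoprime_one_right (by norm_num) one_pos) := by
  rcases hp.lt_or_gt with hp | hp
  · right
    simpa using reachable_offEdge isUnit_one.neg (p := -p) (by omega) hq h.neg_left
  · left
    simpa using reachable_offEdge isUnit_one hp hq h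

lemma card_connectedComponent_induce_complInftyZero :
    Nat.card (Farey.induce complInftyZero).ConnectedComponent = 2 := by
  refine Nat.card_eq_two_iff.mpr
    ⟨SimpleGraph.connectedComponentMk _ (offEdge 1 1 isCoprime_one_right one_ne_zero one_pos),
      SimpleGraph.connectedComponentMk _ (offEdge (-1) 1 isCoprime_one_right (by norm_num) one_pos),
      fun heq => ?_, Set.eq_univ_of_forall fun c => ?_⟩
  · have hneg : (0 : ℤ) < -1 * 1 := (isPositive_iff_of_reachable
      (SimpleGraph.ConnectedComponent.exact heq)).mp (by norm_num : (0 : ℤ) < 1 * 1)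
    norm_num at hneg
  · induction c using SimpleGraph.ConnectedComponent.ind with | h x => ?_
    obtain ⟨p, q, h, hp, hq, rfl⟩ := exists_offEdge_eq x
    rcases reachable_offEdge_one_or_neg_one h hp hq with hr | hr
    · exact .inl (SimpleGraph.ConnectedComponent.sound hr)
    · exact .inr (SimpleGraph.ConnectedComponent.sound hr)

end FareyVertex

open FareyVertex in
theorem farey_edge_separates (u w : FareyVertex) (h : Farey.Adj u w) :
    (∃ c₁ c₂ : (Farey.induce ({u, w}ᶜ : Set FareyVertex)).ConnectedComponent,
      c₁ ≠ c₂ ∧ ∀ c : (Farey.induce ({u, w}ᶜ : Set FareyVertex)).ConnectedComponent,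
        c = c₁ ∨ c = c₂) ∧
    ¬ (Farey.induce ({u, w}ᶜ : Set FareyVertex)).Connected := by
  obtain ⟨g, rfl, rfl⟩ := exists_smul_eq_of_farey_adj h
  have hbij := (glIso g).toEquiv.bijOn_compl_pair infty zero
  have hcard := (Nat.card_congr ((glIso g).induce hbij).connectedComponentEquiv).symm.trans
    card_connectedComponent_induce_complInftyZero
  obtain ⟨c₁, c₂, hne, huniv⟩ := Nat.card_eq_two_iff.mp hcard
  refine ⟨⟨c₁, c₂, hne, fun c => ?_⟩, fun hconn => hne ?_⟩
  · have hc : c ∈ ({c₁, c₂} : Set _) := huniv ▸ Set.mem_univ c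
    exact hc
  · exact hconn.preconnected.subsingleton_connectedComponent.elim c₁ c₂
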